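/- A generalized principal lattice of degree n is a GC_n set: for each node x_{i₀j₀k₀} (i₀+j₀+k₀ = n), the product of the lines ℓ_i^0 (i < i₀), ℓ_j^1 (j < j₀), ℓ_k^2 (k < k₀), suitably normalized, is its fundamental polynomial. -/

import Mathlib

attribute [local instance] Classical.propDecidable

/-- Evaluate a bivariate polynomial at a point of the plane. -/
noncomputable def evalPt (p : MvPolynomial (Fin 2) ℝ) (A : ℝ × ℝ) : ℝ :=
  MvPolynomial.eval ![A.1, A.2] p

/-- A (polynomial defining a) line: a bivariate polynomial of total degree exactly 1. -/
def IsLinearPoly (l : MvPolynomial (Fin 2) ℝ) : Prop := l.totalDegree = 1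

/-- A point lies on the line defined by `l`. -/
def OnLine (l : MvPolynomial (Fin 2) ℝ) (A : ℝ × ℝ) : Prop := evalPt l A = 0

/-- Two degree-1 polynomials define the same line (same zero set). -/
def SameLine (l₁ l₂ : MvPolynomial (Fin 2) ℝ) : Prop := ∀ P, OnLine l₁ P ↔ OnLine l₂ P

/-- `X` is an `n`-correct set of nodes in the plane. -/
def NCorrect (n : ℕ) (X : Finset (ℝ × ℝ)) : Prop :=
  X.card = (n + 2) * (n + 1) / 2 ∧
  ∀ c : (ℝ × ℝ) → ℝ, ∃! p : MvPolynomial (Fin 2) ℝ,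
    p.totalDegree ≤ n ∧ ∀ A ∈ X, evalPt p A = c A

/-- `p` is the `n`-fundamental polynomial of node `A` in `X`. -/
def IsFundamental (n : ℕ) (X : Finset (ℝ × ℝ)) (A : ℝ × ℝ)
    (p : MvPolynomial (Fin 2) ℝ) : Prop :=
  p.totalDegree ≤ n ∧ evalPt p A = 1 ∧ ∀ B ∈ X, B ≠ A → evalPt p B = 0

/-- Node `A` of `X` uses line `l`. -/
def Uses (n : ℕ) (X : Finset (ℝ × ℝ)) (A : ℝ × ℝ) (l : MvPolynomial (Fin 2) ℝ) : Prop :=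
  ∃ p, IsFundamental n X A p ∧ l ∣ p

/-- The set of nodes of `X` using the line `l` (the set `Xˡ`). -/
noncomputable def UsedSet (n : ℕ) (X : Finset (ℝ × ℝ)) (l : MvPolynomial (Fin 2) ℝ) :
    Finset (ℝ × ℝ) := X.filter (fun A => Uses n X A l)

/-- `l` is a maximal line of `X`: a line passing through exactly `n+1` nodes. -/
def IsMaximalLine (n : ℕ) (X : Finset (ℝ × ℝ)) (l : MvPolynomial (Fin 2) ℝ) : Prop :=
  IsLinearPoly l ∧ (X.filter (fun A => OnLine l A)).card = n + 1

/-- `X` is a `GC_n` set. -/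
def GCSet (n : ℕ) (X : Finset (ℝ × ℝ)) : Prop :=
  NCorrect n X ∧
  ∀ A ∈ X, ∃ f : Fin n → MvPolynomial (Fin 2) ℝ,
    (∀ i, IsLinearPoly (f i)) ∧ IsFundamental n X A (∏ i, f i)

/-- `L` is a set of representatives (one per line) of all maximal lines of `X`. -/
def MaximalLinesRep (n : ℕ) (X : Finset (ℝ × ℝ))
    (L : Finset (MvPolynomial (Fin 2) ℝ)) : Prop :=
  (∀ l ∈ L, IsMaximalLine n X l) ∧
  (∀ l₁ ∈ L, ∀ l₂ ∈ L, SameLine l₁ l₂ → l₁ = l₂) ∧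
  (∀ l, IsMaximalLine n X l → ∃ l' ∈ L, SameLine l l')

/-- A maximal line `lam` is `l`-disjoint: it meets `l` at no node of `X`. -/
def IsDisjointMax (n : ℕ) (X : Finset (ℝ × ℝ)) (l lam : MvPolynomial (Fin 2) ℝ) : Prop :=
  IsMaximalLine n X lam ∧ ∀ A ∈ X, ¬(OnLine lam A ∧ OnLine l A)

/-- A maximal line `lam` is a member of a pair of `l`-adjoint maximal lines. -/
def IsAdjointMax (n : ℕ) (X : Finset (ℝ × ℝ)) (l lam : MvPolynomial (Fin 2) ℝ) : Prop :=
  IsMaximalLine n X lam ∧ ∃ lam', IsMaximalLine n X lam' ∧ ¬SameLine lam lam' ∧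
    ∃ A ∈ X, OnLine lam A ∧ OnLine lam' A ∧ OnLine l A

/-- The `l`-lowering `X̂(l)` of `X`. -/
noncomputable def Lowering (n : ℕ) (X : Finset (ℝ × ℝ)) (l : MvPolynomial (Fin 2) ℝ) :
    Finset (ℝ × ℝ) :=
  X.filter (fun A => ¬ ∃ lam, (IsDisjointMax n X l lam ∨ IsAdjointMax n X l lam) ∧ OnLine lam A)

/-- A node `A` is a `1_m`-node of `X` w.r.t. the maximal-line representatives `L`:
it lies on exactly one maximal line. -/
def Is1mNode (L : Finset (MvPolynomial (Fin 2) ℝ)) (A : ℝ × ℝ) : Prop :=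
  (L.filter (fun l => OnLine l A)).card = 1

/-- `k` lines in general position: no two parallel (any two meet in exactly one point),
no three concurrent. -/
def InGenPos (k : ℕ) (f : Fin k → MvPolynomial (Fin 2) ℝ) : Prop :=
  (∀ i, IsLinearPoly (f i)) ∧
  (∀ i j, i ≠ j → ∃! P : ℝ × ℝ, OnLine (f i) P ∧ OnLine (f j) P) ∧
  (∀ i j m, i ≠ j → j ≠ m → i ≠ m →
    ¬ ∃ P : ℝ × ℝ, OnLine (f i) P ∧ OnLine (f j) P ∧ OnLine (f m) P)

/-- `X` is a Chung-Yao lattice of degree `m`. -/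
def IsChungYao (m : ℕ) (X : Finset (ℝ × ℝ)) : Prop :=
  ∃ f : Fin (m + 2) → MvPolynomial (Fin 2) ℝ, InGenPos (m + 2) f ∧
    ∀ P : ℝ × ℝ, P ∈ X ↔ ∃ i j, i ≠ j ∧ OnLine (f i) P ∧ OnLine (f j) P

open Finset MvPolynomial

/-! The fundamental polynomial of the node `x i₀ j₀ k₀` is, up to a constant, the product of the
`n` lines `ℓ_i^0 (i < i₀)`, `ℓ_j^1 (j < j₀)`, `ℓ_k^2 (k < k₀)`. Any other node `x i j k` has
`i < i₀`, `j < j₀` or `k < k₀`, since `i + j + k = i₀ + j₀ + k₀`, so it lies on one of these lines;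
`x i₀ j₀ k₀` lies on none of them, since a line `ℓ_i^0` through it forces `i + j₀ + k₀ = n`.
The nodes, like the monomials of degree at most `n`, are indexed by `{(i, j) | i + j ≤ n}`, so
evaluation at the nodes is a surjective (by Lagrange interpolation) linear map between spaces of
the same dimension; hence it is bijective and `X` is `n`-correct. -/

@[simp] lemma evalPt_one (A : ℝ × ℝ) : evalPt 1 A = 1 := by simp [evalPt]

@[simp] lemma evalPt_mul (p q : MvPolynomial (Fin 2) ℝ) (A : ℝ × ℝ) :
    evalPt (p * q) A = evalPt p A * evalPt q A := by simp [evalPt]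

@[simp] lemma evalPt_smul (c : ℝ) (p : MvPolynomial (Fin 2) ℝ) (A : ℝ × ℝ) :
    evalPt (c • p) A = c * evalPt p A := by simp [evalPt]

@[simp] lemma evalPt_sum {ι : Type*} (s : Finset ι) (f : ι → MvPolynomial (Fin 2) ℝ)
    (A : ℝ × ℝ) : evalPt (∑ i ∈ s, f i) A = ∑ i ∈ s, evalPt (f i) A := by simp [evalPt]

@[simp] lemma evalPt_prod {ι : Type*} (s : Finset ι) (f : ι → MvPolynomial (Fin 2) ℝ)
    (A : ℝ × ℝ) : evalPt (∏ i ∈ s, f i) A = ∏ i ∈ s, evalPt (f i) A := by simp [evalPt]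

lemma card_triangle (n : ℕ) :
    Nat.card {q : ℕ × ℕ // q.1 + q.2 ≤ n} = (n + 2) * (n + 1) / 2 := by
  have hset : {q : ℕ × ℕ | q.1 + q.2 ≤ n} = ↑((range (n + 1)).biUnion antidiagonal) := by
    ext q; simp
  have hdisj : (↑(range (n + 1)) : Set ℕ).PairwiseDisjoint antidiagonal :=
    fun a _ b _ hab => disjoint_left.2 fun q ha hb =>
      hab ((mem_antidiagonal.1 ha).symm.trans (mem_antidiagonal.1 hb))
  have hshift := sum_range_succ' (fun m => m) (n + 1)
  rw [add_zero] at hshift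
  rw [← Set.coe_ofPred, hset, Nat.card_coe_set_eq, Set.ncard_coe_finset, card_biUnion hdisj]
  simp only [Nat.card_antidiagonal]
  rw [← hshift, sum_range_id]
  rfl

lemma MvPolynomial.finrank_restrictTotalDegree_fin_two (R : Type*) [CommRing R] [Nontrivial R]
    (n : ℕ) : Module.finrank R (restrictTotalDegree (Fin 2) R n) = (n + 2) * (n + 1) / 2 := by
  rw [restrictTotalDegree, Module.finrank_eq_nat_card_basis (basisRestrictSupport R _),
    ← card_triangle]
  exact Nat.card_congr ((finTwoArrowEquiv' ℕ).subtypeEquiv fun s => by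
    rw [← finTwoArrowEquiv'_sum_eq, Equiv.symm_apply_apply]; rfl)

section Interpolation

variable {n : ℕ} {X : Finset (ℝ × ℝ)}

lemma isFundamental_inv_smul {A : ℝ × ℝ} {p : MvPolynomial (Fin 2) ℝ} (hdeg : p.totalDegree ≤ n)
    (hA : evalPt p A ≠ 0) (hB : ∀ B ∈ X, B ≠ A → evalPt p B = 0) :
    IsFundamental n X A ((evalPt p A)⁻¹ • p) :=
  ⟨(totalDegree_smul_le _ _).trans hdeg, by simp [hA], fun B hB' hBA => by simp [hB B hB' hBA]⟩

lemma exists_interpolant (hfund : ∀ A ∈ X, ∃ p, IsFundamental n X A p) (c : ℝ × ℝ → ℝ) :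
    ∃ p : MvPolynomial (Fin 2) ℝ, p.totalDegree ≤ n ∧ ∀ A ∈ X, evalPt p A = c A := by
  choose! q hq using hfund
  refine ⟨∑ A ∈ X, c A • q A, ?_, fun B hB => ?_⟩
  · exact (totalDegree_finsetSum _ _).trans <| Finset.sup_le fun A hA =>
      (totalDegree_smul_le _ _).trans (hq A hA).1
  · rw [evalPt_sum, sum_eq_single_of_mem B hB fun A hA hAB => by
      simp [(hq A hA).2.2 B hB hAB.symm]]
    simp [(hq B hB).2.1]

noncomputable def evalOn (n : ℕ) (X : Finset (ℝ × ℝ)) :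
    restrictTotalDegree (Fin 2) ℝ n →ₗ[ℝ] (X → ℝ) where
  toFun p A := evalPt p A
  map_add' p q := by funext A; simp [evalPt]
  map_smul' c p := by funext A; simp

lemma evalOn_surjective (hfund : ∀ A ∈ X, ∃ p, IsFundamental n X A p) :
    Function.Surjective (evalOn n X) := by
  intro g
  obtain ⟨p, hdeg, hp⟩ := exists_interpolant hfund fun A => if h : A ∈ X then g ⟨A, h⟩ else 0
  exact ⟨⟨p, (mem_restrictTotalDegree _ _ _).2 hdeg⟩,
    funext fun A => (hp A A.2).trans (dif_pos A.2)⟩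

lemma evalOn_injective (hcard : X.card = (n + 2) * (n + 1) / 2)
    (hfund : ∀ A ∈ X, ∃ p, IsFundamental n X A p) : Function.Injective (evalOn n X) := by
  refine (LinearMap.injective_iff_surjective_of_finrank_eq_finrank ?_).2 (evalOn_surjective hfund)
  rw [finrank_restrictTotalDegree_fin_two, Module.finrank_fintype_fun_eq_card, Fintype.card_coe,
    hcard]

lemma nCorrect_of_isFundamental (hcard : X.card = (n + 2) * (n + 1) / 2)
    (hfund : ∀ A ∈ X, ∃ p, IsFundamental n X A p) : NCorrect n X := by
  refine ⟨hcard, fun c => ?_⟩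
  obtain ⟨p, hp⟩ := exists_interpolant hfund c
  refine ⟨p, hp, fun q hq => ?_⟩
  have h : evalOn n X ⟨q, (mem_restrictTotalDegree _ _ _).2 hq.1⟩ =
      evalOn n X ⟨p, (mem_restrictTotalDegree _ _ _).2 hp.1⟩ :=
    funext fun A => (hq.2 A A.2).trans (hp.2 A A.2).symm
  exact congrArg Subtype.val (evalOn_injective hcard hfund h)

end Interpolation

lemma IsLinearPoly.smul {l : MvPolynomial (Fin 2) ℝ} (hl : IsLinearPoly l) {c : ℝ}
    (hc : c ≠ 0) : IsLinearPoly (c • l) := by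
  refine le_antisymm ((totalDegree_smul_le _ _).trans hl.le) ?_
  calc 1 = l.totalDegree := hl.symm
    _ = (c⁻¹ • c • l).totalDegree := by rw [inv_smul_smul₀ hc]
    _ ≤ (c • l).totalDegree := totalDegree_smul_le _ _

def IsProductOfLines (k : ℕ) (p : MvPolynomial (Fin 2) ℝ) : Prop :=
  ∃ f : Fin k → MvPolynomial (Fin 2) ℝ, (∀ i, IsLinearPoly (f i)) ∧ ∏ i, f i = p

lemma isProductOfLines_prod {ι : Type*} {s : Finset ι} {g : ι → MvPolynomial (Fin 2) ℝ}
    (hg : ∀ i ∈ s, IsLinearPoly (g i)) : IsProductOfLines s.card (∏ i ∈ s, g i) := by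
  let e := Fintype.equivFinOfCardEq (Fintype.card_coe s)
  refine ⟨fun j => g (e.symm j), fun j => hg _ (e.symm j).2, ?_⟩
  rw [e.symm.prod_comp (fun i : s => g i), prod_coe_sort]

lemma IsProductOfLines.mul {a b : ℕ} {p q : MvPolynomial (Fin 2) ℝ} (hp : IsProductOfLines a p)
    (hq : IsProductOfLines b q) : IsProductOfLines (a + b) (p * q) := by
  obtain ⟨f, hf, rfl⟩ := hp
  obtain ⟨g, hg, rfl⟩ := hq
  refine ⟨Fin.append f g, Fin.addCases (by simpa using hf) (by simpa using hg), ?_⟩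
  simp [Fin.prod_univ_add]

lemma IsProductOfLines.totalDegree_le {k : ℕ} {p : MvPolynomial (Fin 2) ℝ}
    (hp : IsProductOfLines k p) : p.totalDegree ≤ k := by
  obtain ⟨f, hf, rfl⟩ := hp
  refine (totalDegree_finsetProd _ _).trans ?_
  simp [show ∀ i, (f i).totalDegree = 1 from hf]

lemma IsProductOfLines.smul {k : ℕ} {p : MvPolynomial (Fin 2) ℝ} (hp : IsProductOfLines k p)
    {c : ℝ} (hc : c ≠ 0) (hk : k ≠ 0) : IsProductOfLines k (c • p) := by
  obtain ⟨k, rfl⟩ := Nat.exists_eq_succ_of_ne_zero hk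
  obtain ⟨f, hf, rfl⟩ := hp
  refine ⟨Fin.cons (c • f 0) (fun i => f i.succ), Fin.cases ((hf 0).smul hc) fun i => hf _,
    ?_⟩
  simp [Fin.prod_univ_succ]

lemma IsProductOfLines.inv_evalPt_smul {k : ℕ} {p : MvPolynomial (Fin 2) ℝ}
    (hp : IsProductOfLines k p) {A : ℝ × ℝ} (hA : evalPt p A ≠ 0) :
    IsProductOfLines k ((evalPt p A)⁻¹ • p) := by
  rcases eq_or_ne k 0 with rfl | hk
  · obtain ⟨f, -, rfl⟩ := hp
    simpa using ⟨f, finZeroElim, rfl⟩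
  · exact hp.smul (inv_ne_zero hA) hk

section GeneralizedPrincipalLattice

variable {n : ℕ}

noncomputable def linesBelow (l : Fin (n + 1) → MvPolynomial (Fin 2) ℝ) (a : ℕ) :
    MvPolynomial (Fin 2) ℝ :=
  ∏ i ∈ univ.filter (fun i : Fin (n + 1) => (i : ℕ) < a), l i

lemma isProductOfLines_linesBelow {l : Fin (n + 1) → MvPolynomial (Fin 2) ℝ}
    (hl : ∀ i, IsLinearPoly (l i)) {a : ℕ} (ha : a ≤ n + 1) :
    IsProductOfLines a (linesBelow l a) := by
  have h := isProductOfLines_prod (s := univ.filter (fun i : Fin (n + 1) => (i : ℕ) < a))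
    fun i _ => hl i
  rwa [Fin.card_filter_val_lt, min_eq_right ha] at h

lemma evalPt_linesBelow_eq_zero_iff {l : Fin (n + 1) → MvPolynomial (Fin 2) ℝ} {a : ℕ}
    {P : ℝ × ℝ} :
    evalPt (linesBelow l a) P = 0 ↔ ∃ i : Fin (n + 1), (i : ℕ) < a ∧ OnLine (l i) P := by
  simp [linesBelow, prod_eq_zero_iff, OnLine]

variable {X : Finset (ℝ × ℝ)} {ell : Fin 3 → Fin (n + 1) → MvPolynomial (Fin 2) ℝ}
  {x : Fin (n + 1) → Fin (n + 1) → Fin (n + 1) → ℝ × ℝ}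

noncomputable def gplProd (ell : Fin 3 → Fin (n + 1) → MvPolynomial (Fin 2) ℝ)
    (i j k : Fin (n + 1)) : MvPolynomial (Fin 2) ℝ :=
  linesBelow (ell 0) i * linesBelow (ell 1) j * linesBelow (ell 2) k

lemma isProductOfLines_gplProd (hlin : ∀ r i, IsLinearPoly (ell r i)) {i j k : Fin (n + 1)}
    (h : (i : ℕ) + j + k = n) : IsProductOfLines n (gplProd ell i j k) := by
  have hp := ((isProductOfLines_linesBelow (hlin 0) i.isLt.le).mul
    (isProductOfLines_linesBelow (hlin 1) j.isLt.le)).mul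
    (isProductOfLines_linesBelow (hlin 2) k.isLt.le)
  rwa [h] at hp

lemma evalPt_gplProd_node_ne_zero
    (hiff : ∀ i j k : Fin (n + 1),
      (∃ P ∈ X, OnLine (ell 0 i) P ∧ OnLine (ell 1 j) P ∧ OnLine (ell 2 k) P) ↔
        (i : ℕ) + j + k = n)
    (hx : ∀ i j k : Fin (n + 1), (i : ℕ) + j + k = n →
      x i j k ∈ X ∧ OnLine (ell 0 i) (x i j k) ∧ OnLine (ell 1 j) (x i j k) ∧
        OnLine (ell 2 k) (x i j k))
    {i j k : Fin (n + 1)} (h : (i : ℕ) + j + k = n) :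
    evalPt (gplProd ell i j k) (x i j k) ≠ 0 := by
  obtain ⟨hX, h0, h1, h2⟩ := hx i j k h
  simp only [gplProd, evalPt_mul, ne_eq, mul_eq_zero, evalPt_linesBelow_eq_zero_iff, not_or,
    not_exists, not_and]
  refine ⟨⟨fun i' hi' h0' => ?_, fun j' hj' h1' => ?_⟩, fun k' hk' h2' => ?_⟩
  · have := (hiff i' j k).1 ⟨_, hX, h0', h1, h2⟩; omega
  · have := (hiff i j' k).1 ⟨_, hX, h0, h1', h2⟩; omega
  · have := (hiff i j k').1 ⟨_, hX, h0, h1, h2'⟩; omega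

lemma evalPt_gplProd_eq_zero
    (hx : ∀ i j k : Fin (n + 1), (i : ℕ) + j + k = n →
      x i j k ∈ X ∧ OnLine (ell 0 i) (x i j k) ∧ OnLine (ell 1 j) (x i j k) ∧
        OnLine (ell 2 k) (x i j k))
    (hXeq : ∀ P ∈ X, ∃ i j k : Fin (n + 1), (i : ℕ) + j + k = n ∧ P = x i j k)
    {i j k : Fin (n + 1)} (h : (i : ℕ) + j + k = n) {B : ℝ × ℝ} (hB : B ∈ X)
    (hne : B ≠ x i j k) : evalPt (gplProd ell i j k) B = 0 := by
  obtain ⟨i', j', k', h', rfl⟩ := hXeq B hB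
  obtain ⟨-, h0, h1, h2⟩ := hx i' j' k' h'
  have hlt : (i' : ℕ) < i ∨ (j' : ℕ) < j ∨ (k' : ℕ) < k := by
    by_contra! hge
    obtain rfl : i' = i := Fin.ext (by omega)
    obtain rfl : j' = j := Fin.ext (by omega)
    obtain rfl : k' = k := Fin.ext (by omega)
    exact hne rfl
  simp only [gplProd, evalPt_mul, mul_eq_zero, evalPt_linesBelow_eq_zero_iff]
  rcases hlt with hlt | hlt | hlt
  exacts [.inl (.inl ⟨i', hlt, h0⟩), .inl (.inr ⟨j', hlt, h1⟩), .inr ⟨k', hlt, h2⟩]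

lemma gpl_node_injective
    (hiff : ∀ i j k : Fin (n + 1),
      (∃ P ∈ X, OnLine (ell 0 i) P ∧ OnLine (ell 1 j) P ∧ OnLine (ell 2 k) P) ↔
        (i : ℕ) + j + k = n)
    (hx : ∀ i j k : Fin (n + 1), (i : ℕ) + j + k = n →
      x i j k ∈ X ∧ OnLine (ell 0 i) (x i j k) ∧ OnLine (ell 1 j) (x i j k) ∧
        OnLine (ell 2 k) (x i j k))
    {i j k i' j' k' : Fin (n + 1)} (h : (i : ℕ) + j + k = n) (h' : (i' : ℕ) + j' + k' = n)
    (heq : x i j k = x i' j' k') : i = i' ∧ j = j' ∧ k = k' := by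
  obtain ⟨hX, h0, h1, h2⟩ := hx i j k h
  obtain ⟨-, h0', h1', -⟩ := hx i' j' k' h'
  rw [← heq] at h0' h1'
  have e0 := (hiff i' j k).1 ⟨_, hX, h0', h1, h2⟩
  have e1 := (hiff i j' k).1 ⟨_, hX, h0, h1', h2⟩
  exact ⟨Fin.ext (by omega), Fin.ext (by omega), Fin.ext (by omega)⟩

lemma gpl_card_eq
    (hiff : ∀ i j k : Fin (n + 1),
      (∃ P ∈ X, OnLine (ell 0 i) P ∧ OnLine (ell 1 j) P ∧ OnLine (ell 2 k) P) ↔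
        (i : ℕ) + j + k = n)
    (hx : ∀ i j k : Fin (n + 1), (i : ℕ) + j + k = n →
      x i j k ∈ X ∧ OnLine (ell 0 i) (x i j k) ∧ OnLine (ell 1 j) (x i j k) ∧
        OnLine (ell 2 k) (x i j k))
    (hXeq : ∀ P ∈ X, ∃ i j k : Fin (n + 1), (i : ℕ) + j + k = n ∧ P = x i j k) :
    X.card = (n + 2) * (n + 1) / 2 := by
  have hsum (q : {q : ℕ × ℕ // q.1 + q.2 ≤ n}) :
      ((⟨q.1.1, by omega⟩ : Fin (n + 1)) : ℕ) + (⟨q.1.2, by omega⟩ : Fin (n + 1)) +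
        (⟨n - q.1.1 - q.1.2, by omega⟩ : Fin (n + 1)) = n := by
    have := q.2; simp only; omega
  let node (q : {q : ℕ × ℕ // q.1 + q.2 ≤ n}) : X :=
    ⟨x ⟨q.1.1, by omega⟩ ⟨q.1.2, by omega⟩ ⟨n - q.1.1 - q.1.2, by omega⟩,
      (hx _ _ _ (hsum q)).1⟩
  have hinj : Function.Injective node := fun q q' hq => by
    obtain ⟨e0, e1, -⟩ :=
      gpl_node_injective hiff hx (hsum q) (hsum q') (congrArg Subtype.val hq)
    exact Subtype.ext (Prod.ext (congrArg Fin.val e0) (congrArg Fin.val e1))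
  have hsurj : Function.Surjective node := fun ⟨P, hP⟩ => by
    obtain ⟨i, j, k, h, rfl⟩ := hXeq P hP
    refine ⟨⟨(i, j), by omega⟩, Subtype.ext ?_⟩
    simp only [node]
    congr; omega
  rw [← Nat.card_eq_finsetCard, ← card_triangle]
  exact (Nat.card_congr (Equiv.ofBijective node ⟨hinj, hsurj⟩)).symm

end GeneralizedPrincipalLattice

theorem GPL_is_GC_general
    (n : ℕ) (X : Finset (ℝ × ℝ))
    (ell : Fin 3 → Fin (n + 1) → MvPolynomial (Fin 2) ℝ)
    (hlin : ∀ r i, IsLinearPoly (ell r i))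
    (hiff : ∀ i j k : Fin (n + 1),
      (∃ P ∈ X, OnLine (ell 0 i) P ∧ OnLine (ell 1 j) P ∧ OnLine (ell 2 k) P) ↔
        (i : ℕ) + j + k = n)
    (x : Fin (n + 1) → Fin (n + 1) → Fin (n + 1) → ℝ × ℝ)
    (hx : ∀ i j k : Fin (n + 1), (i : ℕ) + j + k = n →
      x i j k ∈ X ∧ OnLine (ell 0 i) (x i j k) ∧ OnLine (ell 1 j) (x i j k) ∧
        OnLine (ell 2 k) (x i j k))
    (hXeq : ∀ P ∈ X, ∃ i j k : Fin (n + 1), (i : ℕ) + j + k = n ∧ P = x i j k) :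
    GCSet n X ∧
    ∀ i₀ j₀ k₀ : Fin (n + 1), (i₀ : ℕ) + j₀ + k₀ = n →
      ∃ c : ℝ, IsFundamental n X (x i₀ j₀ k₀)
        (c • ((∏ i ∈ Finset.univ.filter (fun i : Fin (n + 1) => (i : ℕ) < i₀), ell 0 i) *
              (∏ j ∈ Finset.univ.filter (fun j : Fin (n + 1) => (j : ℕ) < j₀), ell 1 j) *
              (∏ k ∈ Finset.univ.filter (fun k : Fin (n + 1) => (k : ℕ) < k₀), ell 2 k))) := by
  have hfund (i j k : Fin (n + 1)) (h : (i : ℕ) + j + k = n) :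
      IsFundamental n X (x i j k)
        ((evalPt (gplProd ell i j k) (x i j k))⁻¹ • gplProd ell i j k) :=
    isFundamental_inv_smul (isProductOfLines_gplProd hlin h).totalDegree_le
      (evalPt_gplProd_node_ne_zero hiff hx h) fun _ => evalPt_gplProd_eq_zero hx hXeq h
  refine ⟨⟨nCorrect_of_isFundamental (gpl_card_eq hiff hx hXeq) fun A hA => ?_,
    fun A hA => ?_⟩, fun i₀ j₀ k₀ h => ⟨_, hfund i₀ j₀ k₀ h⟩⟩
  · obtain ⟨i, j, k, h, rfl⟩ := hXeq A hA
    exact ⟨_, hfund i j k h⟩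
  · obtain ⟨i, j, k, h, rfl⟩ := hXeq A hA
    obtain ⟨f, hf, hprod⟩ := (isProductOfLines_gplProd hlin h).inv_evalPt_smul
      (evalPt_gplProd_node_ne_zero hiff hx h)
    exact ⟨f, hf, hprod ▸ hfund i j k h⟩

/-- A generalized principal lattice of degree `n` is a `GC_n` set, with
fundamental polynomial of the node `x_{i₀j₀k₀}` the suitably normalized product of the
lines `ℓ_i^0 (i < i₀)`, `ℓ_j^1 (j < j₀)`, `ℓ_k^2 (k < k₀)`. -/
theorem GPL_is_GC
    (n : ℕ) (X : Finset (ℝ × ℝ))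
    (ell : Fin 3 → Fin (n + 1) → MvPolynomial (Fin 2) ℝ)
    (hlin : ∀ r i, IsLinearPoly (ell r i))
    (hdist : ∀ r i r' i', (r, i) ≠ (r', i') → ¬ SameLine (ell r i) (ell r' i'))
    (hiff : ∀ i j k : Fin (n + 1),
      (∃ P ∈ X, OnLine (ell 0 i) P ∧ OnLine (ell 1 j) P ∧ OnLine (ell 2 k) P) ↔
        (i : ℕ) + j + k = n)
    (x : Fin (n + 1) → Fin (n + 1) → Fin (n + 1) → ℝ × ℝ)
    (hx : ∀ i j k : Fin (n + 1), (i : ℕ) + j + k = n →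
      x i j k ∈ X ∧ OnLine (ell 0 i) (x i j k) ∧ OnLine (ell 1 j) (x i j k) ∧
        OnLine (ell 2 k) (x i j k))
    (hXeq : ∀ P ∈ X, ∃ i j k : Fin (n + 1), (i : ℕ) + j + k = n ∧ P = x i j k) :
    GCSet n X ∧
    ∀ i₀ j₀ k₀ : Fin (n + 1), (i₀ : ℕ) + j₀ + k₀ = n →
      ∃ c : ℝ, IsFundamental n X (x i₀ j₀ k₀)
        (c • ((∏ i ∈ Finset.univ.filter (fun i : Fin (n + 1) => (i : ℕ) < i₀), ell 0 i) *
              (∏ j ∈ Finset.univ.filter (fun j : Fin (n + 1) => (j : ℕ) < j₀), ell 1 j) *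
              (∏ k ∈ Finset.univ.filter (fun k : Fin (n + 1) => (k : ℕ) < k₀), ell 2 k))) :=
  GPL_is_GC_general n X ell hlin hiff x hx hXeq
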